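/- Let φ : ℕ × ℕ → ℂ be a bounded function. Then φ is a Schur multiplier such that S_φ(A) is a positive operator for every positive operator A ∈ B(ℓ²) if and only if there exists a sequence of bounded functions a_k : ℕ → ℂ (k ∈ ℕ) such that sup_{i ∈ ℕ} Σ_{k=1}^∞ |a_k(i)|² < ∞ and φ(i,j) = Σ_{k=1}^∞ a_k(i) · conj(a_k(j)) for all i, j ∈ ℕ. -/

import Mathlib

/-!
If `φ(i,j) = ∑ₖ aₖ(i) conj(aₖ(j))`, then `S_φ(A) = V† (A ⊗ 1) V`, where `V ξ = (aₖ ξ)ₖ` maps `ℓ²`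
into `ℓ²(ℕ, ℓ²)`: `V` is bounded because `∑ₖ |aₖ(i)|²` is bounded in `i`, and `S_φ(A)` is then
visibly positive when `A` is.

Conversely, apply `S_φ` to the positive rank one operator `w ⊗ w*`, where `w ∈ ℓ²` has no zero
entry. The result is positive, hence of the form `R† R`, and its matrix is `φ(i,j) conj(wᵢ) wⱼ`.
So `φ(i,j) = ⟪uⱼ, uᵢ⟫` with `uᵢ = conj(wᵢ)⁻¹ R eᵢ`, and `aₖ(i) = uᵢ(k)` works: `‖uᵢ‖² = φ(i,i)` is
the diagonal of `S_φ(1)`, so it is bounded by `‖S_φ(1)‖`.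
-/

open scoped InnerProductSpace

noncomputable section

/-- The Hilbert space `ℓ² = ℓ²(ℕ, ℂ)`. -/
abbrev l2 : Type := lp (fun _ : ℕ => ℂ) 2

/-- The standard orthonormal basis vector `e i` of `ℓ²`. -/
def e (i : ℕ) : l2 := lp.single 2 i 1

/-- The matrix entry `a(i,j) = ⟪A e_j, e_i⟫` of a bounded operator `A` on `ℓ²`. -/
def ent (A : l2 →L[ℂ] l2) (i j : ℕ) : ℂ := ⟪A (e j), e i⟫_ℂ

/-- A function `φ : ℕ × ℕ → ℂ` is a Schur multiplier if for every bounded operator `A` on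
`ℓ²` there is a bounded operator on `ℓ²` whose matrix is `(φ(i,j) * a(i,j))`. -/
def IsSchurMultiplier (φ : ℕ × ℕ → ℂ) : Prop :=
  ∀ A : l2 →L[ℂ] l2, ∃ B : l2 →L[ℂ] l2, ∀ i j, ent B i j = φ (i, j) * ent A i j

open scoped ENNReal NNReal InnerProduct lp ComplexOrder ComplexConjugate
open InnerProductSpace

namespace lp

section

variable {ι : Type*} {E : ι → Type*} [∀ i, NormedAddCommGroup (E i)]

theorem memℓp_two_iff {f : ∀ i, E i} : Memℓp f 2 ↔ Summable fun i => ‖f i‖ ^ 2 := by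
  rw [memℓp_gen_iff (by norm_num)]
  norm_num

theorem summable_norm_sq (f : lp E 2) : Summable fun i => ‖f i‖ ^ 2 :=
  memℓp_two_iff.1 (lp.memℓp f)

theorem norm_sq_eq_tsum (f : lp E 2) : ‖f‖ ^ 2 = ∑' i, ‖f i‖ ^ 2 := by
  simpa using lp.norm_rpow_eq_tsum (p := 2) (by norm_num) f

end

variable {𝕜 ι κ E F : Type*} [RCLike 𝕜] [NormedAddCommGroup E] [NormedSpace 𝕜 E]
  [NormedAddCommGroup F] [NormedSpace 𝕜 F] {p : ℝ≥0∞} [Fact (1 ≤ p)]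

section Diagonal

variable (d : ι → 𝕜) {c : ℝ≥0} (hd : ∀ i, ‖d i‖ ≤ c)
include hd

omit [Fact (1 ≤ p)] in
theorem memℓp_diagonal (x : lp (fun _ : ι => 𝕜) p) : Memℓp (fun i => d i * x i) p :=
  ((lp.memℓp x).norm.const_mul c).mono fun i => by
    rw [norm_mul]
    exact mul_le_mul_of_nonneg_right (hd i) (norm_nonneg _)

theorem norm_diagonal_le (x : lp (fun _ : ι => 𝕜) p) :
    ‖(⟨fun i => d i * x i, memℓp_diagonal d hd x⟩ : lp (fun _ : ι => 𝕜) p)‖ ≤ c * ‖x‖ := by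
  have hp : p ≠ 0 := (zero_lt_one.trans_le Fact.out).ne'
  have hle (i : ι) : ‖d i * x i‖ ≤ ‖(((c : ℝ) : 𝕜) • x) i‖ := by
    rw [lp.coeFn_smul, Pi.smul_apply, norm_smul, norm_mul, RCLike.norm_ofReal, NNReal.abs_eq]
    exact mul_le_mul_of_nonneg_right (hd i) (norm_nonneg _)
  calc _ ≤ ‖((c : ℝ) : 𝕜) • x‖ := lp.norm_mono hp hle
    _ = c * ‖x‖ := by rw [lp.norm_const_smul hp, RCLike.norm_ofReal, NNReal.abs_eq]

variable (p) in
def diagonalCLM : lp (fun _ : ι => 𝕜) p →L[𝕜] lp (fun _ : ι => 𝕜) p :=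
  LinearMap.mkContinuous
    { toFun := fun x => ⟨fun i => d i * x i, memℓp_diagonal d hd x⟩
      map_add' := fun _ _ => lp.ext <| funext fun _ => mul_add _ _ _
      map_smul' := fun _ _ => lp.ext <| funext fun _ => mul_left_comm _ _ _ }
    c (norm_diagonal_le d hd)

@[simp]
theorem diagonalCLM_apply_apply (x : lp (fun _ : ι => 𝕜) p) (i : ι) :
    diagonalCLM p d hd x i = d i * x i :=
  rfl

end Diagonal

omit [Fact (1 ≤ p)] in
theorem memℓp_map (A : E →L[𝕜] F) (x : lp (fun _ : ι => E) p) : Memℓp (fun k => A (x k)) p :=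
  ((lp.memℓp x).norm.const_mul ‖A‖).mono fun k => A.le_opNorm (x k)

theorem norm_map_le (A : E →L[𝕜] F) (x : lp (fun _ : ι => E) p) :
    ‖(⟨fun k => A (x k), memℓp_map A x⟩ : lp (fun _ : ι => F) p)‖ ≤ ‖A‖ * ‖x‖ := by
  have hp : p ≠ 0 := (zero_lt_one.trans_le Fact.out).ne'
  have hle (k : ι) : ‖A (x k)‖ ≤ ‖((‖A‖ : 𝕜) • x) k‖ := by
    rw [lp.coeFn_smul, Pi.smul_apply, norm_smul, RCLike.norm_ofReal, abs_norm]
    exact A.le_opNorm (x k)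
  calc _ ≤ ‖(‖A‖ : 𝕜) • x‖ := lp.norm_mono hp hle
    _ = ‖A‖ * ‖x‖ := by rw [lp.norm_const_smul hp, RCLike.norm_ofReal, abs_norm]

variable (𝕜 ι p) in
def mapL : (E →L[𝕜] F) →L[𝕜] lp (fun _ : ι => E) p →L[𝕜] lp (fun _ : ι => F) p :=
  LinearMap.mkContinuous₂
    (LinearMap.mk₂ 𝕜 (fun A x => ⟨fun k => A (x k), memℓp_map A x⟩)
      (fun _ _ _ => rfl) (fun _ _ _ => lp.ext <| funext fun _ => by simp)
      (fun A _ _ => lp.ext <| funext fun _ => map_add A _ _)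
      (fun _ _ _ => lp.ext <| funext fun _ => by simp))
    1 fun A x => by rw [one_mul]; exact norm_map_le A x

@[simp]
theorem mapL_apply_apply (A : E →L[𝕜] F) (x : lp (fun _ : ι => E) p) (k : ι) :
    mapL 𝕜 ι p A x k = A (x k) :=
  rfl

section Column

variable (T : κ → E →L[𝕜] F) {C : ℝ≥0} (hT : ∀ x (s : Finset κ), ∑ k ∈ s, ‖T k x‖ ^ 2 ≤ C * ‖x‖ ^ 2)
include hT

theorem memℓp_column (x : E) : Memℓp (fun k => T k x) 2 :=
  memℓp_two_iff.2 (summable_of_sum_le (fun _ => by positivity) (hT x))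

theorem norm_column_le (x : E) :
    ‖(⟨fun k => T k x, memℓp_column T hT x⟩ : lp (fun _ : κ => F) 2)‖ ≤ √C * ‖x‖ := by
  refine (pow_le_pow_iff_left₀ (norm_nonneg _) (by positivity) two_ne_zero).1 ?_
  calc _ = ∑' k, ‖T k x‖ ^ 2 := norm_sq_eq_tsum _
    _ ≤ C * ‖x‖ ^ 2 := (memℓp_two_iff.1 (memℓp_column T hT x)).tsum_le_of_sum_le (hT x)
    _ = (√C * ‖x‖) ^ 2 := by simp [mul_pow]

def columnCLM : E →L[𝕜] lp (fun _ : κ => F) 2 :=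
  LinearMap.mkContinuous
    { toFun := fun x => ⟨fun k => T k x, memℓp_column T hT x⟩
      map_add' := fun _ _ => lp.ext <| funext fun k => map_add (T k) _ _
      map_smul' := fun _ _ => lp.ext <| funext fun k => map_smul (T k) _ _ }
    √C (norm_column_le T hT)

end Column

end lp

section Schur

variable {𝕜 ι κ : Type*} [RCLike 𝕜] (a : κ → ι → 𝕜) {C : ℝ≥0}
  (ha : ∀ i (s : Finset κ), ∑ k ∈ s, ‖a k i‖ ^ 2 ≤ C)
include ha

theorem norm_le_sqrt_of_forall_sum_le (k : κ) (i : ι) : ‖a k i‖ ≤ NNReal.sqrt C := by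
  rw [Real.coe_sqrt, Real.le_sqrt (norm_nonneg _) C.coe_nonneg]
  simpa using ha i {k}

theorem sum_norm_diagonalCLM_sq_le (ξ : ℓ²(ι, 𝕜)) (s : Finset κ) :
    ∑ k ∈ s, ‖lp.diagonalCLM 2 (a k) (norm_le_sqrt_of_forall_sum_le a ha k) ξ‖ ^ 2
      ≤ C * ‖ξ‖ ^ 2 := by
  have hξ := (lp.summable_norm_sq ξ).mul_left (C : ℝ)
  have hle (i : ι) : (∑ k ∈ s, ‖a k i‖ ^ 2) * ‖ξ i‖ ^ 2 ≤ C * ‖ξ i‖ ^ 2 := by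
    gcongr
    exact ha i s
  calc _ = ∑' i, (∑ k ∈ s, ‖a k i‖ ^ 2) * ‖ξ i‖ ^ 2 := by
        simp only [lp.norm_sq_eq_tsum, lp.diagonalCLM_apply_apply]
        rw [← Summable.tsum_finsetSum fun k _ => ?_]
        · simp only [norm_mul, mul_pow, Finset.sum_mul]
        · exact lp.summable_norm_sq
            (lp.diagonalCLM 2 (a k) (norm_le_sqrt_of_forall_sum_le a ha k) ξ)
    _ ≤ ∑' i, C * ‖ξ i‖ ^ 2 :=
        (hξ.of_nonneg_of_le (fun _ => by positivity) hle).tsum_le_tsum hle hξ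
    _ = C * ‖ξ‖ ^ 2 := by rw [tsum_mul_left, lp.norm_sq_eq_tsum]

def schurDilation : ℓ²(ι, 𝕜) →L[𝕜] lp (fun _ : κ => ℓ²(ι, 𝕜)) 2 :=
  lp.columnCLM (fun k => lp.diagonalCLM 2 (a k) (norm_le_sqrt_of_forall_sum_le a ha k))
    (sum_norm_diagonalCLM_sq_le a ha)

theorem schurDilation_apply_apply (ξ : ℓ²(ι, 𝕜)) (k : κ) (i : ι) :
    schurDilation a ha ξ k i = a k i * ξ i :=
  rfl

/-- `A ↦ V† (A ⊗ 1) V` for the dilation `V`, where `A ⊗ 1 = lp.mapL A` acts coordinatewise. -/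
def schurMultiplierOf : (ℓ²(ι, 𝕜) →L[𝕜] ℓ²(ι, 𝕜)) →L[𝕜] ℓ²(ι, 𝕜) →L[𝕜] ℓ²(ι, 𝕜) :=
  ContinuousLinearMap.compL 𝕜 ℓ²(ι, 𝕜) (lp (fun _ : κ => ℓ²(ι, 𝕜)) 2) ℓ²(ι, 𝕜)
      ((schurDilation a ha)†) ∘L
    (ContinuousLinearMap.compL 𝕜 ℓ²(ι, 𝕜) _ _).flip (schurDilation a ha) ∘L lp.mapL 𝕜 κ 2

theorem inner_schurMultiplierOf_apply (A : ℓ²(ι, 𝕜) →L[𝕜] ℓ²(ι, 𝕜)) (x y : ℓ²(ι, 𝕜)) :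
    ⟪schurMultiplierOf a ha A x, y⟫_𝕜 =
      ∑' k, ⟪A (schurDilation a ha x k), schurDilation a ha y k⟫_𝕜 := by
  simp [schurMultiplierOf, ContinuousLinearMap.adjoint_inner_left, lp.inner_eq_tsum]

theorem schurMultiplierOf_nonneg {A : ℓ²(ι, 𝕜) →L[𝕜] ℓ²(ι, 𝕜)} (hA : ∀ x, 0 ≤ ⟪A x, x⟫_𝕜)
    (x : ℓ²(ι, 𝕜)) : 0 ≤ ⟪schurMultiplierOf a ha A x, x⟫_𝕜 := by
  rw [inner_schurMultiplierOf_apply]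
  exact tsum_nonneg fun k => hA _

variable [DecidableEq ι]

theorem schurDilation_single (j : ι) (k : κ) :
    schurDilation a ha (lp.single 2 j 1) k = a k j • lp.single 2 j 1 := by
  ext i
  by_cases h : i = j <;> simp [schurDilation_apply_apply, h]

theorem inner_schurMultiplierOf_single (A : ℓ²(ι, 𝕜) →L[𝕜] ℓ²(ι, 𝕜)) (i j : ι) :
    ⟪schurMultiplierOf a ha A (lp.single 2 j 1), lp.single 2 i 1⟫_𝕜 =
      (∑' k, a k i * conj (a k j)) * ⟪A (lp.single 2 j 1), lp.single 2 i 1⟫_𝕜 := by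
  simp only [inner_schurMultiplierOf_apply, schurDilation_single, map_smul, inner_smul_left,
    inner_smul_right, ← tsum_mul_right]
  refine tsum_congr fun k => ?_
  ring

end Schur

namespace ContinuousLinearMap

variable {H : Type*} [NormedAddCommGroup H] [InnerProductSpace ℂ H]

theorem isPositive_of_inner_nonneg {T : H →L[ℂ] H} (hT : ∀ x, 0 ≤ ⟪T x, x⟫_ℂ) : T.IsPositive := by
  refine (T.isPositive_iff_complex).2 fun x => ?_
  obtain ⟨hre, him⟩ := Complex.nonneg_iff.1 (hT x)
  exact ⟨Complex.ext (by simp) (by simp [him]), hre⟩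

theorem IsPositive.exists_eq_adjoint_comp_self [CompleteSpace H] {T : H →L[ℂ] H}
    (hT : T.IsPositive) : ∃ R : H →L[ℂ] H, T = R† ∘L R := by
  obtain ⟨R, hR⟩ := CStarAlgebra.nonneg_iff_eq_star_mul_self.1 ((nonneg_iff_isPositive T).2 hT)
  exact ⟨R, by rw [hR, star_eq_adjoint]; rfl⟩

end ContinuousLinearMap

theorem exists_l2_forall_ne_zero : ∃ w : l2, ∀ i, w i ≠ 0 := by
  refine ⟨⟨fun i => (2 : ℂ)⁻¹ ^ i, lp.memℓp_two_iff.2 ?_⟩, fun i => by simp⟩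
  convert summable_geometric_of_lt_one (r := (4 : ℝ)⁻¹) (by norm_num) (by norm_num) using 2 with i
  rw [norm_pow, norm_inv, Complex.norm_ofNat, ← pow_mul, mul_comm, pow_mul]
  norm_num

theorem inner_e_right (x : l2) (i : ℕ) : ⟪x, e i⟫_ℂ = conj (x i) := by
  simp [e, lp.inner_single_right]

theorem ent_rankOne (x y : l2) (i j : ℕ) : ent (rankOne ℂ x y) i j = conj (x i) * y j := by
  simp [ent, inner_e_right]

theorem ent_adjoint_comp_self (R : l2 →L[ℂ] l2) (i j : ℕ) :
    ent (R† ∘L R) i j = ⟪R (e j), R (e i)⟫_ℂ := by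
  simp [ent, ContinuousLinearMap.adjoint_inner_left]

theorem ent_one_self (i : ℕ) : ent 1 i i = 1 := by
  simp [ent, e]

theorem norm_ent_le (B : l2 →L[ℂ] l2) (i j : ℕ) : ‖ent B i j‖ ≤ ‖B‖ := by
  have he (i : ℕ) : ‖e i‖ = 1 := by simp [e, lp.norm_single]
  calc ‖ent B i j‖ ≤ ‖B (e j)‖ * ‖e i‖ := norm_inner_le_norm _ _
    _ ≤ ‖B‖ * ‖e j‖ * ‖e i‖ := by gcongr; exact B.le_opNorm _
    _ = ‖B‖ := by rw [he, he, mul_one, mul_one]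

theorem exists_gram_of_schur_nonneg {φ : ℕ × ℕ → ℂ} {S : (l2 →L[ℂ] l2) → l2 →L[ℂ] l2}
    (hS : ∀ A i j, ent (S A) i j = φ (i, j) * ent A i j)
    (hpos : ∀ A : l2 →L[ℂ] l2, (∀ ξ, 0 ≤ ⟪A ξ, ξ⟫_ℂ) → ∀ ξ, 0 ≤ ⟪S A ξ, ξ⟫_ℂ) :
    ∃ u : ℕ → l2, ∀ i j, φ (i, j) = ⟪u j, u i⟫_ℂ := by
  obtain ⟨w, hw⟩ := exists_l2_forall_ne_zero
  have hQ := (isPositive_rankOne_self (𝕜 := ℂ) w).inner_nonneg_left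
  obtain ⟨R, hR⟩ := (ContinuousLinearMap.isPositive_of_inner_nonneg
    (hpos _ hQ)).exists_eq_adjoint_comp_self
  refine ⟨fun i => (conj (w i))⁻¹ • R (e i), fun i j => ?_⟩
  have hij := hS (rankOne ℂ w w) i j
  rw [hR, ent_adjoint_comp_self, ent_rankOne] at hij
  have hwi : conj (w i) ≠ 0 := by simpa using hw i
  rw [inner_smul_left, inner_smul_right, hij, map_inv₀, Complex.conj_conj]
  field_simp [hw j]

open scoped ComplexOrder ComplexConjugate in
theorem positive_schur_multipliers_general (φ : ℕ × ℕ → ℂ) :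
    (∃ S : (l2 →L[ℂ] l2) →L[ℂ] (l2 →L[ℂ] l2),
        (∀ A : l2 →L[ℂ] l2, ∀ i j, ent (S A) i j = φ (i, j) * ent A i j) ∧
        ∀ A : l2 →L[ℂ] l2, (∀ ξ : l2, 0 ≤ ⟪A ξ, ξ⟫_ℂ) → ∀ ξ : l2, 0 ≤ ⟪S A ξ, ξ⟫_ℂ)
    ↔ ∃ a : ℕ → ℕ → ℂ,
        (∀ k, ∃ c, ∀ i, ‖a k i‖ ≤ c) ∧
        (∀ i, Summable fun k => ‖a k i‖ ^ 2) ∧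
        BddAbove (Set.range fun i => ∑' k, ‖a k i‖ ^ 2) ∧
        ∀ i j, φ (i, j) = ∑' k, a k i * conj (a k j) := by
  constructor
  · rintro ⟨S, hS, hpos⟩
    obtain ⟨u, hu⟩ := exists_gram_of_schur_nonneg hS hpos
    have hu_norm (i : ℕ) : ‖u i‖ ^ 2 ≤ ‖S 1‖ := by
      simpa [hS, ent_one_self, hu, inner_self_eq_norm_sq_to_K] using norm_ent_le (S 1) i i
    refine ⟨fun k i => u i k, fun k => ⟨√‖S 1‖, fun i => ?_⟩, fun i => lp.summable_norm_sq (u i),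
      ⟨‖S 1‖, ?_⟩, fun i j => ?_⟩
    · exact (lp.norm_apply_le_norm two_ne_zero (u i) k).trans (Real.le_sqrt_of_sq_le (hu_norm i))
    · rintro _ ⟨i, rfl⟩
      simpa only [← lp.norm_sq_eq_tsum] using hu_norm i
    · rw [hu, lp.inner_eq_tsum]
      exact tsum_congr fun k => by simp
  · rintro ⟨a, -, hsum, ⟨C, hC⟩, hφ⟩
    have ha (i : ℕ) (s : Finset ℕ) : ∑ k ∈ s, ‖a k i‖ ^ 2 ≤ C.toNNReal :=
      ((hsum i).sum_le_tsum s fun _ _ => sq_nonneg _).trans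
        ((hC ⟨i, rfl⟩).trans (Real.le_coe_toNNReal C))
    refine ⟨schurMultiplierOf a ha, fun A i j => ?_, fun A hA => schurMultiplierOf_nonneg a ha hA⟩
    rw [hφ]
    exact inner_schurMultiplierOf_single a ha A i j

open scoped ComplexOrder ComplexConjugate in
/-- A bounded `φ : ℕ × ℕ → ℂ` is a positive Schur multiplier (i.e. a Schur
multiplier whose induced map `S_φ` sends positive operators to positive operators) if and
only if `φ(i,j) = Σ_k a_k(i) conj(a_k(j))` for a sequence of bounded functions `a_k` with
`sup_i Σ_k |a_k(i)|² < ∞`. -/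
theorem positive_schur_multipliers (φ : ℕ × ℕ → ℂ) (Cb : ℝ)
    (hφb : ∀ p : ℕ × ℕ, ‖φ p‖ ≤ Cb) :
    (∃ S : (l2 →L[ℂ] l2) →L[ℂ] (l2 →L[ℂ] l2),
        (∀ A : l2 →L[ℂ] l2, ∀ i j, ent (S A) i j = φ (i, j) * ent A i j) ∧
        ∀ A : l2 →L[ℂ] l2, (∀ ξ : l2, 0 ≤ ⟪A ξ, ξ⟫_ℂ) → ∀ ξ : l2, 0 ≤ ⟪S A ξ, ξ⟫_ℂ)
    ↔ ∃ a : ℕ → ℕ → ℂ,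
        (∀ k, ∃ c, ∀ i, ‖a k i‖ ≤ c) ∧
        (∀ i, Summable fun k => ‖a k i‖ ^ 2) ∧
        BddAbove (Set.range fun i => ∑' k, ‖a k i‖ ^ 2) ∧
        ∀ i j, φ (i, j) = ∑' k, a k i * conj (a k j) :=
  positive_schur_multipliers_general φ

end
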